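/- The optimal occupation numbers attain the bathtub value: for b > 0 and g ≥ 0, define m* : ℕ → ℝ by m*(n) = 1 for 0 ≤ n ≤ ⌊2πg/b⌋ − 1, m*(⌊2πg/b⌋) = {2πg/b}, and m*(n) = 0 otherwise. Then 0 ≤ m*(n) ≤ 1 for all n, ∑_{n=0}^∞ m*(n) = 2πg/b, and ∑_{n=0}^∞ b(2n+1) m*(n) = b·( (2πg/b)² + {2πg/b}(1 − {2πg/b}) ) = (4π/b) F(b,g). -/

import Mathlib

/-!
The profile `m*` is supported on `{0, …, N}` with `N = ⌊x⌋`, so both series are finite sums.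
Since `∑_{n<N} (2n+1) = N²` and `x = N + {x}`, the weighted sum is
`N² + (2N+1){x} = x² + {x}(1 − {x})`; the identity with `F(b,g)` is algebra in `x = 2πg/b`.
-/

open Real

/-- The magnetic penalization function
`F(b,g) = πg² + (b²/(4π))·{2πg/b}·(1 − {2πg/b})`. -/
noncomputable def Fpen (b g : ℝ) : ℝ :=
  π * g ^ 2 + b ^ 2 / (4 * π) * Int.fract (2 * π * g / b) * (1 - Int.fract (2 * π * g / b))

lemma natFloor_add_fract {x : ℝ} (hx : 0 ≤ x) : (⌊x⌋₊ : ℝ) + Int.fract x = x := by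
  rw [natCast_floor_eq_intCast_floor hx, Int.floor_add_fract]

lemma sum_range_two_mul_add_one {R : Type*} [CommSemiring R] (N : ℕ) :
    ∑ n ∈ Finset.range N, (2 * (n : R) + 1) = (N : R) ^ 2 := by
  induction N with
  | zero => simp
  | succ k ih => rw [Finset.sum_range_succ, ih]; push_cast; ring

/-- The minimiser of `∑ (2n+1) mₙ` under `0 ≤ mₙ ≤ 1`, `∑ mₙ = x`:
fill the levels from the bottom. -/
noncomputable def bathtubProfile (x : ℝ) (n : ℕ) : ℝ :=
  if (n : ℤ) < ⌊x⌋ then 1 else if (n : ℤ) = ⌊x⌋ then Int.fract x else 0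

lemma bathtubProfile_mem_Icc (x : ℝ) (n : ℕ) : bathtubProfile x n ∈ Set.Icc 0 1 := by
  unfold bathtubProfile
  split_ifs
  · exact ⟨zero_le_one, le_rfl⟩
  · exact ⟨Int.fract_nonneg x, (Int.fract_lt_one x).le⟩
  · exact ⟨le_rfl, zero_le_one⟩

lemma bathtubProfile_eq_natFloor {x : ℝ} (hx : 0 ≤ x) (n : ℕ) :
    bathtubProfile x n = if n < ⌊x⌋₊ then 1 else if n = ⌊x⌋₊ then Int.fract x else 0 := by
  simp only [bathtubProfile, ← Int.natCast_floor_eq_floor hx, Nat.cast_lt, Nat.cast_inj]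

lemma hasSum_mul_bathtubProfile {x : ℝ} (hx : 0 ≤ x) (w : ℕ → ℝ) :
    HasSum (fun n ↦ w n * bathtubProfile x n)
      (∑ n ∈ Finset.range ⌊x⌋₊, w n + w ⌊x⌋₊ * Int.fract x) := by
  have hsupp : ∀ n ∉ Finset.range (⌊x⌋₊ + 1), w n * bathtubProfile x n = 0 := by
    intro n hn
    rw [Finset.mem_range, not_lt] at hn
    rw [bathtubProfile_eq_natFloor hx, if_neg (by omega), if_neg (by omega), mul_zero]
  convert (hasSum_sum_of_ne_finset_zero hsupp : HasSum _ _) using 1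
  rw [Finset.sum_range_succ, bathtubProfile_eq_natFloor hx, if_neg (lt_irrefl _), if_pos rfl]
  congr 1
  refine Finset.sum_congr rfl fun n hn ↦ ?_
  rw [bathtubProfile_eq_natFloor hx, if_pos (Finset.mem_range.mp hn), mul_one]

lemma hasSum_bathtubProfile {x : ℝ} (hx : 0 ≤ x) : HasSum (bathtubProfile x) x := by
  convert hasSum_mul_bathtubProfile hx 1 using 1
  · simp only [Pi.one_apply, one_mul]
  · simp only [Pi.one_apply, Finset.sum_const, Finset.card_range, nsmul_eq_mul, mul_one, one_mul,
      natFloor_add_fract hx]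

lemma hasSum_odd_mul_bathtubProfile {x : ℝ} (hx : 0 ≤ x) :
    HasSum (fun n : ℕ ↦ (2 * n + 1) * bathtubProfile x n)
      (x ^ 2 + Int.fract x * (1 - Int.fract x)) := by
  convert hasSum_mul_bathtubProfile hx (fun n ↦ 2 * n + 1) using 1
  rw [sum_range_two_mul_add_one]
  linear_combination (x + ⌊x⌋₊ + Int.fract x) * (natFloor_add_fract hx).symm

lemma mul_sq_add_fract_mul_eq_Fpen {b : ℝ} (hb : b ≠ 0) (g : ℝ) :
    b * ((2 * π * g / b) ^ 2 + Int.fract (2 * π * g / b) * (1 - Int.fract (2 * π * g / b))) =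
      4 * π / b * Fpen b g := by
  rw [Fpen]
  field_simp
  ring

/-- The optimal occupation numbers `m*` (equal to `1` below the level `⌊2πg/b⌋`, to
`{2πg/b}` at that level, and `0` above) satisfy the constraints `0 ≤ m* ≤ 1`,
`∑ₙ m*(n) = 2πg/b`, and attain the bathtub value
`∑ₙ b(2n+1) m*(n) = b((2πg/b)² + {2πg/b}(1−{2πg/b})) = (4π/b) F(b,g)`. -/
theorem bathtub_optimizer (b g : ℝ) (hb : 0 < b) (hg : 0 ≤ g) :
    let x := 2 * π * g / b
    let m : ℕ → ℝ := fun n =>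
      if (n : ℤ) < ⌊x⌋ then 1 else if (n : ℤ) = ⌊x⌋ then Int.fract x else 0
    (∀ n, 0 ≤ m n ∧ m n ≤ 1) ∧
    (∑' n, m n) = x ∧
    (∑' n, b * (2 * n + 1) * m n) = b * (x ^ 2 + Int.fract x * (1 - Int.fract x)) ∧
    b * (x ^ 2 + Int.fract x * (1 - Int.fract x)) = (4 * π / b) * Fpen b g := by
  intro x m
  have hx : 0 ≤ x := by positivity
  have hm : m = bathtubProfile x := rfl
  refine ⟨bathtubProfile_mem_Icc x, (hasSum_bathtubProfile hx).tsum_eq, ?_,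
    mul_sq_add_fract_mul_eq_Fpen hb.ne' g⟩
  simp only [hm, mul_assoc]
  exact ((hasSum_odd_mul_bathtubProfile hx).mul_left b).tsum_eq
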